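/- arXiv:math/0210381 — 6 statements merged into one kernel-verified Lean document; each statement's English description precedes it below -/
import Mathlib

section
/- If I is an ideal containing a regular element in a Noetherian ring R, then the Ratliff-Rush closure of I contains I and is idempotent: taking the Ratliff-Rush closure of the Ratliff-Rush closure gives the Ratliff-Rush closure. -/
/-- The Ratliff–Rush closure of an ideal `I`: the union (supremum) of the increasing
chain of ideals `(I^{n+1} : I^n)` for `n ≥ 0`. -/
noncomputable def ratliffRushClosure {R : Type*} [CommRing R] (I : Ideal R) : Ideal R :=
  ⨆ n : ℕ, Submodule.colon (I ^ (n + 1)) ((I ^ n : Ideal R) : Set R)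

/-!
Since `R` is Noetherian, the increasing chain `(I^{n+1} : I^n)` stabilizes, so the Ratliff–Rush
closure `J` of `I` satisfies `J I^n ⊆ I^{n+1}` for all `n ≥ N`, hence `J^k I^N ⊆ I^{N+k}`.
If `x J^m ⊆ J^{m+1}`, then `x I^{N+m} ⊆ x J^m I^N ⊆ J^{m+1} I^N ⊆ I^{N+m+1}`, so `x ∈ J`.
-/

namespace Ideal

variable {R : Type*} [CommRing R]

theorem le_colon_iff_mul_le {I J K : Ideal R} : J ≤ I.colon (K : Set R) ↔ J * K ≤ I := by
  simp only [SetLike.le_def, Submodule.mem_colon, SetLike.mem_coe, smul_eq_mul]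
  exact (Ideal.mul_le).symm

theorem pow_mul_pow_le_pow_add {I J : Ideal R} {N : ℕ}
    (hJ : ∀ n ≥ N, J * I ^ n ≤ I ^ (n + 1)) (k : ℕ) : J ^ k * I ^ N ≤ I ^ (N + k) := by
  induction k with
  | zero => simp
  | succ k ih =>
    calc J ^ (k + 1) * I ^ N = J * (J ^ k * I ^ N) := by ring
      _ ≤ J * I ^ (N + k) := mul_mono_right ih
      _ ≤ I ^ (N + (k + 1)) := hJ (N + k) (Nat.le_add_right N k)

end Ideal

section RatliffRush

variable {R : Type*} [CommRing R]

open Ideal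

theorem monotone_colon_pow_succ_pow (I : Ideal R) :
    Monotone fun n : ℕ => (I ^ (n + 1)).colon ((I ^ n : Ideal R) : Set R) := by
  refine monotone_nat_of_le_succ fun n => le_colon_iff_mul_le.mpr ?_
  calc _ = (I ^ (n + 1)).colon ((I ^ n : Ideal R) : Set R) * I ^ n * I := by
        rw [pow_succ, mul_assoc]
    _ ≤ I ^ (n + 1) * I := mul_mono_left (le_colon_iff_mul_le.mp le_rfl)
    _ = I ^ (n + 1 + 1) := (pow_succ _ _).symm

theorem le_ratliffRushClosure (I : Ideal R) : I ≤ ratliffRushClosure I :=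
  le_iSup_of_le 0 <| le_colon_iff_mul_le.mpr <| by simp

theorem exists_ratliffRushClosure_eq_colon [IsNoetherianRing R] (I : Ideal R) :
    ∃ N, ∀ n ≥ N, ratliffRushClosure I = (I ^ (n + 1)).colon ((I ^ n : Ideal R) : Set R) := by
  set f := fun n : ℕ => (I ^ (n + 1)).colon ((I ^ n : Ideal R) : Set R)
  obtain ⟨N, hN⟩ := monotone_stabilizes_iff_noetherian.mpr inferInstance
    ⟨f, monotone_colon_pow_succ_pow I⟩
  have hclosure : ratliffRushClosure I = f N :=
    le_antisymm (iSup_le fun n => (monotone_colon_pow_succ_pow I (le_max_left n N)).trans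
      (hN _ (le_max_right n N)).ge) (le_iSup f N)
  exact ⟨N, fun n hn => hclosure.trans (hN n hn)⟩

theorem ratliffRushClosure_le_of_mul_pow_le {I J : Ideal R} (hIJ : I ≤ J) {N : ℕ}
    (hJ : ∀ n ≥ N, J * I ^ n ≤ I ^ (n + 1)) : ratliffRushClosure J ≤ ratliffRushClosure I := by
  refine iSup_le fun m => le_iSup_of_le (N + m) <| le_colon_iff_mul_le.mpr ?_
  set K := (J ^ (m + 1)).colon ((J ^ m : Ideal R) : Set R)
  calc K * I ^ (N + m) = K * I ^ m * I ^ N := by rw [pow_add, mul_comm (I ^ N), mul_assoc]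
    _ ≤ K * J ^ m * I ^ N := by gcongr
    _ ≤ J ^ (m + 1) * I ^ N := mul_mono_left (le_colon_iff_mul_le.mp le_rfl)
    _ ≤ I ^ (N + m + 1) := pow_mul_pow_le_pow_add hJ (m + 1)

end RatliffRush

theorem ratliffRush_le_and_idem_general {R : Type*} [CommRing R] [IsNoetherianRing R]
    (I : Ideal R) :
    I ≤ ratliffRushClosure I ∧
      ratliffRushClosure (ratliffRushClosure I) = ratliffRushClosure I := by
  refine ⟨le_ratliffRushClosure I, le_antisymm ?_ (le_ratliffRushClosure _)⟩
  obtain ⟨N, hN⟩ := exists_ratliffRushClosure_eq_colon I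
  exact ratliffRushClosure_le_of_mul_pow_le (le_ratliffRushClosure I)
    fun n hn => Ideal.le_colon_iff_mul_le.mp (hN n hn).le

/-- If `I` is an ideal containing a regular element in a Noetherian ring `R`, then the
Ratliff–Rush closure of `I` contains `I` and is idempotent. -/
theorem ratliffRush_le_and_idem {R : Type*} [CommRing R] [IsNoetherianRing R]
    (I : Ideal R) (hreg : ∃ r ∈ I, r ∈ nonZeroDivisors R) :
    I ≤ ratliffRushClosure I ∧
      ratliffRushClosure (ratliffRushClosure I) = ratliffRushClosure I :=
  ratliffRush_le_and_idem_general I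
end

section
/- Let I be an ideal containing a regular element in a Noetherian ring R, and let (x_1, ..., x_g) generate a reduction of I (i.e., (x_1,...,x_g)I^n = I^{n+1} for large n). Then the Ratliff-Rush closure of I equals the union over n ≥ 0 of the colon ideals I^{n+1} : (x_1^n, ..., x_g^n). -/
/-
If `J = (x_1, …, x_g)` satisfies `J I^n = I^{n+1}` for `n ≥ N`, then `I^{N+m} = J^m I^N` for
all `m`. Since `x_i^n ∈ I^n`, each `I^{n+1} : I^n` lies in `I^{n+1} : (x_1^n, …, x_g^n)`.
Conversely, by pigeonhole every monomial of degree `n + k > g(n-1)` in the `x_i` is divisible by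
some `x_i^n`, so `J^{n+k} ≤ (x_1^n, …, x_g^n) J^k`. Hence if `r x_i^n ∈ I^{n+1}` for all `i`, then
`r I^{N+n+k} = r J^{n+k} I^N ≤ I^{n+1} J^k I^N ≤ I^{N+n+k+1}`.
-/

theorem pow_add_eq_pow_mul_pow_of_mul_pow_eq {M : Type*} [CommMonoid M] {a b : M} {N : ℕ}
    (h : ∀ n ≥ N, b * a ^ n = a ^ (n + 1)) (m : ℕ) : a ^ (N + m) = b ^ m * a ^ N := by
  induction m with
  | zero => simp
  | succ m ih =>
    rw [← add_assoc, ← h _ (Nat.le_add_right N m), ih, pow_succ']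
    ac_rfl

namespace Ideal

open Set
open scoped Pointwise

variable {R : Type*} [CommSemiring R]

theorem le_colon_iff_mul_le_s3 {A P Q : Ideal R} : A ≤ P.colon (Q : Set R) ↔ A * Q ≤ P := by
  simp only [SetLike.le_def, Submodule.mem_colon, SetLike.mem_coe, smul_eq_mul, ← Ideal.mul_le]

theorem span_range_le {ι : Type*} {I : Ideal R} {x : ι → R} (hx : ∀ i, x i ∈ I) :
    span (range x) ≤ I :=
  span_le.2 (range_subset_iff.2 hx)

theorem span_range_pow_le_pow {ι : Type*} {I : Ideal R} {x : ι → R} (hx : ∀ i, x i ∈ I)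
    (n : ℕ) : span (range fun i => x i ^ n) ≤ I ^ n :=
  span_range_le fun i => pow_mem_pow (hx i) n

theorem prod_comp_mem_span_range_pow_mul_pow {ι α : Type*} [Fintype ι] [Fintype α]
    (x : ι → R) (f : α → ι) {n k : ℕ} (hα : Fintype.card α = n + k)
    (hnk : Fintype.card ι * (n - 1) < n + k) :
    ∏ a, x (f a) ∈ span (range fun i => x i ^ n) * span (range x) ^ k := by
  classical
  obtain ⟨i, hi⟩ := Fintype.exists_lt_card_fiber_of_mul_lt_card (f := f) (hα ▸ hnk)
  obtain ⟨t, hti, ht⟩ := Finset.exists_subset_card_eq (s := {a | f a = i}) (n := n) (by omega)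
  have htc : tᶜ.card = k := by rw [Finset.card_compl, hα, ht]; omega
  have hprod_t : ∏ a ∈ t, x (f a) = x i ^ n := by
    rw [Finset.prod_congr rfl fun a ha => by rw [(Finset.mem_filter.1 (hti ha)).2],
      Finset.prod_const, ht]
  rw [← Finset.prod_mul_prod_compl t, hprod_t]
  refine mul_mem_mul (subset_span (mem_range_self i)) ?_
  rw [← htc, ← Finset.prod_const]
  exact prod_mem_prod fun a _ => subset_span (mem_range_self (f a))

theorem span_range_pow_add_le {ι : Type*} [Fintype ι] (x : ι → R) {n k : ℕ}
    (hnk : Fintype.card ι * (n - 1) < n + k) :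
    span (range x) ^ (n + k) ≤ span (range fun i => x i ^ n) * span (range x) ^ k := by
  classical
  have hpow : span (range x) ^ (n + k) = span (∏ _ : Fin (n + k), range x) := by
    rw [← prod_span, Finset.prod_const, Finset.card_univ, Fintype.card_fin]
  rw [hpow, span_le]
  intro a ha
  obtain ⟨y, hy, rfl⟩ := (Set.mem_fintype_prod _ a).1 ha
  choose f hf using hy
  simp only [← hf]
  exact prod_comp_mem_span_range_pow_mul_pow x f (Fintype.card_fin _) hnk

theorem mul_pow_le_pow_succ_of_reduction {ι : Type*} [Fintype ι] {I A : Ideal R} {x : ι → R}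
    (hx : ∀ i, x i ∈ I) {N : ℕ} (hred : ∀ n ≥ N, span (range x) * I ^ n = I ^ (n + 1))
    {n k : ℕ} (hnk : Fintype.card ι * (n - 1) < n + k)
    (hA : A * span (range fun i => x i ^ n) ≤ I ^ (n + 1)) :
    A * I ^ (N + (n + k)) ≤ I ^ (N + (n + k) + 1) :=
  calc A * I ^ (N + (n + k)) = A * (span (range x) ^ (n + k) * I ^ N) := by
        rw [pow_add_eq_pow_mul_pow_of_mul_pow_eq hred]
    _ ≤ A * (span (range fun i => x i ^ n) * span (range x) ^ k * I ^ N) := by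
        gcongr; exact span_range_pow_add_le x hnk
    _ = A * span (range fun i => x i ^ n) * (span (range x) ^ k * I ^ N) := by ring
    _ ≤ I ^ (n + 1) * (I ^ k * I ^ N) := by gcongr; exact span_range_le hx
    _ = I ^ (N + (n + k) + 1) := by ring

end Ideal

theorem ratliffRush_eq_iSup_colon_reduction_general {R : Type*} [CommRing R]
    (I : Ideal R)
    (g : ℕ) (x : Fin g → R) (hx : ∀ i, x i ∈ I)
    (hred : ∃ N : ℕ, ∀ n ≥ N, Ideal.span (Set.range x) * I ^ n = I ^ (n + 1)) :
    ratliffRushClosure I =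
      ⨆ n : ℕ, Submodule.colon (I ^ (n + 1)) (Ideal.span (Set.range fun i => x i ^ n)) := by
  obtain ⟨N, hN⟩ := hred
  refine le_antisymm (iSup_mono fun n => Submodule.colon_mono le_rfl ?_) (iSup_le fun n => ?_)
  · exact SetLike.coe_subset_coe.2 (Ideal.span_range_pow_le_pow hx n)
  · refine le_iSup_of_le (N + (n + (g * (n - 1) + 1))) (Ideal.le_colon_iff_mul_le_s3.2 ?_)
    refine Ideal.mul_pow_le_pow_succ_of_reduction hx hN ?_ (Ideal.le_colon_iff_mul_le_s3.1 le_rfl)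
    rw [Fintype.card_fin]
    omega

/-- If `I` is an ideal containing a regular element in a Noetherian ring `R` and
`(x_1, …, x_g)` generates a reduction of `I`, then the Ratliff–Rush closure of `I` is the
union over `n ≥ 0` of the colon ideals `I^{n+1} : (x_1^n, …, x_g^n)`. -/
theorem ratliffRush_eq_iSup_colon_reduction {R : Type*} [CommRing R] [IsNoetherianRing R]
    (I : Ideal R) (hreg : ∃ r ∈ I, r ∈ nonZeroDivisors R)
    (g : ℕ) (x : Fin g → R) (hx : ∀ i, x i ∈ I)
    (hred : ∃ N : ℕ, ∀ n ≥ N, Ideal.span (Set.range x) * I ^ n = I ^ (n + 1)) :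
    ratliffRushClosure I =
      ⨆ n : ℕ, Submodule.colon (I ^ (n + 1)) (Ideal.span (Set.range fun i => x i ^ n)) :=
  ratliffRush_eq_iSup_colon_reduction_general I g x hx hred
end

section
/- Let R be a Noetherian local ring and I, J ideals of R. Then the Ratliff-Rush closure of IJ (the stable value of ((IJ)^{n+1} : (IJ)^n)) equals the union over all r, s ≥ 0 of the colon ideals (I^{r+1}J^{s+1} : I^r J^s). -/
/-!
Each chain term `((IJ)^{n+1} : (IJ)^n)` is the colon with `r = s = n`. Conversely, multiplying
both ideals of `(I^{r+1} J^{s+1} : I^r J^s)` by `I^s J^r` can only enlarge the colon, and turns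
it into `((IJ)^{r+s+1} : (IJ)^{r+s})`.
-/

theorem Ideal.colon_le_colon_mul {R : Type*} [CommSemiring R] (A B C : Ideal R) :
    A.colon (B : Set R) ≤ (A * C).colon ((B * C : Ideal R) : Set R) := by
  intro x hx
  simp only [Submodule.mem_colon, smul_eq_mul, SetLike.mem_coe] at hx ⊢
  rw [← Ideal.span_singleton_mul_le_iff] at hx ⊢
  rw [← mul_assoc]
  exact Ideal.mul_mono_left hx

theorem ratliffRush_mul_eq_iSup_colon_general {R : Type*} [CommRing R] (I J : Ideal R) :
    ratliffRushClosure (I * J) =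
      ⨆ p : ℕ × ℕ,
        Submodule.colon (I ^ (p.1 + 1) * J ^ (p.2 + 1)) (I ^ p.1 * J ^ p.2) := by
  refine le_antisymm (iSup_le fun n ↦ le_iSup_of_le (n, n) ?_) (iSup_le fun ⟨r, s⟩ ↦ ?_)
  · rw [mul_pow, mul_pow]
  · have hnum : I ^ (r + 1) * J ^ (s + 1) * (I ^ s * J ^ r) = (I * J) ^ (r + s + 1) := by ring
    have hden : I ^ r * J ^ s * (I ^ s * J ^ r) = (I * J) ^ (r + s) := by ring
    refine le_iSup_of_le (r + s) ?_
    rw [← hnum, ← hden]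
    exact Ideal.colon_le_colon_mul _ _ _

/-- In a Noetherian local ring, the Ratliff–Rush closure of `IJ` equals the union over all
`r, s ≥ 0` of the colon ideals `(I^{r+1} J^{s+1} : I^r J^s)`. -/
theorem ratliffRush_mul_eq_iSup_colon {R : Type*} [CommRing R] [IsNoetherianRing R]
    [IsLocalRing R] (I J : Ideal R) :
    ratliffRushClosure (I * J) =
      ⨆ p : ℕ × ℕ,
        Submodule.colon (I ^ (p.1 + 1) * J ^ (p.2 + 1)) (I ^ p.1 * J ^ p.2) :=
  ratliffRush_mul_eq_iSup_colon_general I J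
end

section
/- Let R be a Noetherian local ring and I, J ideals of R, and let a, b be positive integers. Then the Ratliff-Rush closure of I^a J^b equals the union over k ≥ 0 of the colon ideals (I^{a+k} J^{b+k} : I^k J^k). -/
namespace Ideal

variable {R : Type*} [CommRing R]

theorem mem_colon_iff_span_singleton_mul_le {A B : Ideal R} {x : R} :
    x ∈ A.colon B ↔ span {x} * B ≤ A := by
  rw [span_singleton_mul_le_iff, Submodule.mem_colon]
  rfl

theorem colon_le_colon_mul_mul (A B C : Ideal R) : A.colon B ≤ (C * A).colon (C * B) := by
  intro x hx
  rw [mem_colon_iff_span_singleton_mul_le] at hx ⊢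
  calc span {x} * (C * B) = C * (span {x} * B) := mul_left_comm _ _ _
    _ ≤ C * A := mul_mono_right hx

theorem colon_le_colon_of_eq_mul {A B A' B' : Ideal R} (C : Ideal R) (hA : A' = C * A)
    (hB : B' = C * B) : A.colon B ≤ A'.colon B' :=
  hA ▸ hB ▸ colon_le_colon_mul_mul A B C

end Ideal

theorem ratliffRush_pow_mul_eq_iSup_colon_general {R : Type*} [CommRing R] (I J : Ideal R) (a b : ℕ)
    (ha : 1 ≤ a) (hb : 1 ≤ b) :
    ratliffRushClosure (I ^ a * J ^ b) =
      ⨆ k : ℕ, Submodule.colon (I ^ (a + k) * J ^ (b + k)) (I ^ k * J ^ k) := by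
  unfold ratliffRushClosure
  apply le_antisymm
  · refine iSup_le fun n => le_trans ?_ (le_iSup _ ((a + b) * n))
    exact Ideal.colon_le_colon_of_eq_mul (I ^ (b * n) * J ^ (a * n)) (by ring) (by ring)
  · obtain ⟨a', rfl⟩ := Nat.exists_eq_add_of_le ha
    obtain ⟨b', rfl⟩ := Nat.exists_eq_add_of_le hb
    refine iSup_le fun k => le_trans ?_ (le_iSup _ k)
    exact Ideal.colon_le_colon_of_eq_mul (I ^ (a' * k) * J ^ (b' * k)) (by ring) (by ring)

/-- In a Noetherian local ring, for positive integers `a, b`, the Ratliff–Rush closure of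
`I^a J^b` equals the union over `k ≥ 0` of the colon ideals `(I^{a+k} J^{b+k} : I^k J^k)`. -/
theorem ratliffRush_pow_mul_eq_iSup_colon {R : Type*} [CommRing R] [IsNoetherianRing R]
    [IsLocalRing R] (I J : Ideal R) (a b : ℕ) (ha : 1 ≤ a) (hb : 1 ≤ b) :
    ratliffRushClosure (I ^ a * J ^ b) =
      ⨆ k : ℕ, Submodule.colon (I ^ (a + k) * J ^ (b + k)) (I ^ k * J ^ k) :=
  ratliffRush_pow_mul_eq_iSup_colon_general I J a b ha hb
end

section
/- Let (R, m) be a 2-dimensional local ring with m-primary ideals I, J, and let (x, y; z, w) be a complete reduction of (I, J) (so x, y ∈ I, z, w ∈ J and (xz, yw) is a reduction of IJ). Then (x, w) and (y, z) are both joint reductions of (I, J); that is, xJ + wI and yJ + zI are reductions of IJ. -/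
open IsLocalRing

namespace Ideal

variable {R : Type*} [CommSemiring R]

theorem eventually_mul_pow_eq_of_le {L K M : Ideal R} (hLK : L ≤ K) (hKM : K ≤ M)
    (hL : ∃ N : ℕ, ∀ n ≥ N, L * M ^ n = M ^ (n + 1)) :
    ∃ N : ℕ, ∀ n ≥ N, K * M ^ n = M ^ (n + 1) := by
  obtain ⟨N, hN⟩ := hL
  refine ⟨N, fun n hn => le_antisymm ?_ ?_⟩
  · calc K * M ^ n ≤ M * M ^ n := mul_mono_left hKM
      _ = M ^ (n + 1) := (pow_succ' M n).symm
  · calc M ^ (n + 1) = L * M ^ n := (hN n hn).symm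
      _ ≤ K * M ^ n := mul_mono_left hLK

theorem span_singleton_mul_sup_span_singleton_mul_le {I J : Ideal R} {a b : R}
    (ha : a ∈ I) (hb : b ∈ J) : span {a} * J + span {b} * I ≤ I * J :=
  sup_le (mul_mono_left ((span_singleton_le_iff_mem I).2 ha))
    (mul_comm I J ▸ mul_mono_left ((span_singleton_le_iff_mem J).2 hb))

theorem span_pair_mul_le_span_singleton_mul_sup {I J : Ideal R} {a b c d : R}
    (hc : c ∈ J) (hd : d ∈ I) :
    span {a * c, d * b} ≤ span {a} * J + span {b} * I := by
  rw [span_le, Set.pair_subset_iff]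
  exact ⟨mem_sup_left (mul_mem_mul (mem_span_singleton_self a) hc),
    mem_sup_right (mul_comm b d ▸ mul_mem_mul (mem_span_singleton_self b) hd)⟩

end Ideal

theorem jointReductions_of_completeReduction_general {R : Type*} [CommRing R]
    (I J : Ideal R)
    (x y z w : R) (hx : x ∈ I) (hy : y ∈ I) (hz : z ∈ J) (hw : w ∈ J)
    (hcr : ∃ N : ℕ, ∀ n ≥ N,
      Ideal.span {x * z, y * w} * (I * J) ^ n = (I * J) ^ (n + 1)) :
    (∃ N : ℕ, ∀ n ≥ N,
        (Ideal.span {x} * J + Ideal.span {w} * I) * (I * J) ^ n = (I * J) ^ (n + 1)) ∧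
      (∃ N : ℕ, ∀ n ≥ N,
        (Ideal.span {y} * J + Ideal.span {z} * I) * (I * J) ^ n = (I * J) ^ (n + 1)) := by
  refine ⟨Ideal.eventually_mul_pow_eq_of_le (Ideal.span_pair_mul_le_span_singleton_mul_sup hz hy)
      (Ideal.span_singleton_mul_sup_span_singleton_mul_le hx hw) hcr,
    Ideal.eventually_mul_pow_eq_of_le ?_
      (Ideal.span_singleton_mul_sup_span_singleton_mul_le hy hz) hcr⟩
  rw [Set.pair_comm]
  exact Ideal.span_pair_mul_le_span_singleton_mul_sup hw hx

/-- Let `(R, m)` be a 2-dimensional Noetherian local ring with infinite residue field and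
`m`-primary ideals `I, J`, and let `(x, y; z, w)` be a complete reduction of `(I, J)`
(so `x, y ∈ I`, `z, w ∈ J` and `(xz, yw)` is a reduction of `IJ`).  Then `(x, w)` and
`(y, z)` are both joint reductions of `(I, J)`: `xJ + wI` and `yJ + zI` are reductions
of `IJ`. -/
theorem jointReductions_of_completeReduction {R : Type*} [CommRing R]
    [IsNoetherianRing R] [IsLocalRing R] [Infinite (ResidueField R)]
    (hdim : ringKrullDim R = 2)
    (I J : Ideal R) (hI : I.radical = maximalIdeal R) (hJ : J.radical = maximalIdeal R)
    (x y z w : R) (hx : x ∈ I) (hy : y ∈ I) (hz : z ∈ J) (hw : w ∈ J)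
    (hcr : ∃ N : ℕ, ∀ n ≥ N,
      Ideal.span {x * z, y * w} * (I * J) ^ n = (I * J) ^ (n + 1)) :
    (∃ N : ℕ, ∀ n ≥ N,
        (Ideal.span {x} * J + Ideal.span {w} * I) * (I * J) ^ n = (I * J) ^ (n + 1)) ∧
      (∃ N : ℕ, ∀ n ≥ N,
        (Ideal.span {y} * J + Ideal.span {z} * I) * (I * J) ^ n = (I * J) ^ (n + 1)) :=
  jointReductions_of_completeReduction_general I J x y z w hx hy hz hw hcr
end

section
/- Let R = k[[X,Y,Z]]/(X², XY) with maximal ideal m and let y, z denote the images of Y, Z in R. Then (y^{2k}, z^{2k}) m^{2k} = m^{4k} for all k ≥ 1; that is, (y^{2k}, z^{2k}) is a reduction of m^{2k} with reduction number at most 1 in the sense that it absorbs m^{2k} into m^{4k}. -/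
/-- The ring `R = k[[X,Y,Z]]/(X², XY)`. -/
abbrev ExampleRing (k : Type*) [Field k] : Type _ :=
  MvPowerSeries (Fin 3) k ⧸
    (Ideal.span {(MvPowerSeries.X 0 : MvPowerSeries (Fin 3) k) ^ 2,
      (MvPowerSeries.X 0 : MvPowerSeries (Fin 3) k) * MvPowerSeries.X 1})

/-- The image of `X i` in `R = k[[X,Y,Z]]/(X², XY)`. -/
noncomputable def exVar (k : Type*) [Field k] (i : Fin 3) : ExampleRing k :=
  Ideal.Quotient.mk _ (MvPowerSeries.X i)

/-- The maximal ideal `m = (x, y, z)` of `R = k[[X,Y,Z]]/(X², XY)`. -/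
noncomputable def exMaxIdeal (k : Type*) [Field k] : Ideal (ExampleRing k) :=
  Ideal.span {exVar k 0, exVar k 1, exVar k 2}

/-!
Write `m = (y) + (x, z)`. Since `x² = xy = 0`, one has `(x, z) m = z m`, hence
`(x, z)ⁿ mⁿ = zⁿ mⁿ`. In the binomial expansion of `m²ⁿ = ((y) + (x, z))²ⁿ` every term has
`y`-degree or `(x, z)`-degree at least `n`, so `m²ⁿ ⊆ yⁿ mⁿ + (x, z)ⁿ mⁿ = (yⁿ, zⁿ) mⁿ`.
-/

namespace Ideal

variable {R : Type*} [CommSemiring R]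

theorem sup_pow_add_le (I J : Ideal R) (a b : ℕ) :
    (I ⊔ J) ^ (a + b) ≤ I ^ a * (I ⊔ J) ^ b ⊔ J ^ b * (I ⊔ J) ^ a := by
  rw [← add_eq_sup, ← add_eq_sup, add_pow, sum_eq_sup]
  refine Finset.sup_le fun i hi => (mul_le_left (I := I ^ i * J ^ (a + b - i))).trans ?_
  replace hi : i ≤ a + b := Nat.lt_succ_iff.mp (Finset.mem_range.mp hi)
  rcases le_or_gt a i with hai | hia
  · obtain ⟨j, rfl⟩ := Nat.exists_eq_add_of_le hai
    calc I ^ (a + j) * J ^ (a + b - (a + j)) = I ^ a * (I ^ j * J ^ (b - j)) := by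
          rw [Nat.add_sub_add_left, pow_add, mul_assoc]
      _ ≤ I ^ a * ((I + J) ^ j * (I + J) ^ (b - j)) := by gcongr <;> simp
      _ = I ^ a * (I + J) ^ b := by rw [← pow_add, Nat.add_sub_cancel' (by omega)]
      _ ≤ _ := le_sup_left
  · obtain ⟨j, hj⟩ : ∃ j, a + b - i = b + j := ⟨a - i, by omega⟩
    calc I ^ i * J ^ (a + b - i) = J ^ b * (I ^ i * J ^ j) := by
          rw [hj, pow_add]; ring
      _ ≤ J ^ b * ((I + J) ^ i * (I + J) ^ j) := by gcongr <;> simp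
      _ = J ^ b * (I + J) ^ a := by rw [← pow_add]; congr 2; omega
      _ ≤ _ := le_sup_right

theorem pow_sup_pow_mul_pow_eq {M Y W Z : Ideal R} (hM : M = Y ⊔ W) (hW : W * M = Z * M)
    (hZ : Z ≤ M) (n : ℕ) : (Y ^ n ⊔ Z ^ n) * M ^ n = M ^ (n + n) := by
  refine le_antisymm ?_ ?_
  · rw [pow_add]
    exact mul_mono_left (sup_le (pow_right_mono (hM ▸ le_sup_left) n) (pow_right_mono hZ n))
  · calc M ^ (n + n) ≤ Y ^ n * M ^ n ⊔ W ^ n * M ^ n := hM ▸ sup_pow_add_le Y W n n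
      _ = (Y ^ n ⊔ Z ^ n) * M ^ n := by rw [← mul_pow W, hW, mul_pow, sup_mul]

end Ideal

open Ideal

section ExampleRing

variable (k : Type*) [Field k]

theorem exVar_zero_mul_self : exVar k 0 * exVar k 0 = 0 :=
  Ideal.Quotient.eq_zero_iff_mem.mpr (subset_span (Or.inl (sq _).symm))

theorem exVar_zero_mul_exVar_one : exVar k 0 * exVar k 1 = 0 :=
  Ideal.Quotient.eq_zero_iff_mem.mpr (subset_span (Or.inr rfl))

theorem exMaxIdeal_eq_sup : exMaxIdeal k = span {exVar k 1} ⊔ span {exVar k 0, exVar k 2} := by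
  rw [exMaxIdeal, Set.insert_comm]
  exact Ideal.span_insert _ _

theorem span_exVar_zero_two_mul_exMaxIdeal :
    span {exVar k 0, exVar k 2} * exMaxIdeal k = span {exVar k 2} * exMaxIdeal k := by
  have hx : span {exVar k 0} * exMaxIdeal k = span {exVar k 2} * span {exVar k 0} := by
    rw [span_singleton_mul_span_singleton, mul_comm (exVar k 2)]
    simp only [exMaxIdeal, span_mul_span', Set.singleton_mul, Set.image_insert_eq,
      Set.image_singleton, exVar_zero_mul_self, exVar_zero_mul_exVar_one, Set.insert_eq_of_mem,
      Set.mem_insert_iff, true_or, span_insert_zero]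
  refine le_antisymm ?_ (mul_mono_left (span_mono (Set.subset_insert _ _)))
  rw [Ideal.span_insert (exVar k 0), Ideal.sup_mul, hx]
  exact sup_le
    (mul_mono_right (span_mono (Set.singleton_subset_iff.mpr (Set.mem_insert _ _)))) le_rfl

end ExampleRing

/-- In `R = k[[X,Y,Z]]/(X², XY)` with maximal ideal `m` and `y, z` the images of `Y, Z`,
one has `(y^{2k}, z^{2k}) m^{2k} = m^{4k}` for all `k ≥ 1`; in particular `(y^{2k}, z^{2k})`
is a reduction of `m^{2k}` absorbing `m^{2k}` into `m^{4k}` in one step. -/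
theorem span_pow_mul_eq_pow_example (k : Type*) [Field k] :
    ∀ K : ℕ, 1 ≤ K →
      Ideal.span {exVar k 1 ^ (2 * K), exVar k 2 ^ (2 * K)} * exMaxIdeal k ^ (2 * K) =
        exMaxIdeal k ^ (4 * K) := by
  intro K _
  rw [Ideal.span_insert (exVar k 1 ^ (2 * K)), ← span_singleton_pow, ← span_singleton_pow,
    show 4 * K = 2 * K + 2 * K by ring]
  exact pow_sup_pow_mul_pow_eq (exMaxIdeal_eq_sup k) (span_exVar_zero_two_mul_exMaxIdeal k)
    (span_mono (by simp)) _
end
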